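/- arXiv:0710.1347 — 2 statements merged into one kernel-verified Lean document; each statement's English description precedes it below -/
import Mathlib

section
/- Let ρ < 0 and 0 < r₀ < √(2/|ρ|). Suppose g₁ is a positive smooth rotationally symmetric function on the disk |z| ≤ r₀ satisfying ∂²(log g₁)/∂z∂z̄ = -ρ·g₁ with g₁(0) = 1 and ∂g₁/∂z(0) = 0. Then g₁(z) = (1 + (ρ/2)|z|²)^{-2} on this disk. -/
/-- Wirtinger derivative ∂/∂z of a function f : ℂ → ℂ. -/
noncomputable def wdz (f : ℂ → ℂ) (z : ℂ) : ℂ :=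
  (fderiv ℝ f z 1 - Complex.I * fderiv ℝ f z Complex.I) / 2

/-- Wirtinger derivative ∂/∂z̄ of a function f : ℂ → ℂ. -/
noncomputable def wdzbar (f : ℂ → ℂ) (z : ℂ) : ℂ :=
  (fderiv ℝ f z 1 + Complex.I * fderiv ℝ f z Complex.I) / 2

open Complex Metric Set Filter

lemma wdz_wdzbar_eq (f : ℂ → ℂ) (z : ℂ) (hf : ContDiffAt ℝ (⊤ : ℕ∞) f z) :
    wdz (wdzbar f) z =
      (fderiv ℝ (fderiv ℝ f) z 1 1 + fderiv ℝ (fderiv ℝ f) z I I) / 4 := by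
  have hΦd : DifferentiableAt ℝ (fderiv ℝ f) z :=
    (hf.fderiv_right (m := (⊤ : ℕ∞)) (by simp)).differentiableAt (by simp)
  have hΦ : HasFDerivAt (fderiv ℝ f) (fderiv ℝ (fderiv ℝ f) z) z := hΦd.hasFDerivAt
  set H := fderiv ℝ (fderiv ℝ f) z with hH
  have h1 : HasFDerivAt (fun w => fderiv ℝ f w 1) (H.flip 1) z := by
    have := hΦ.clm_apply (hasFDerivAt_const (1 : ℂ) z)
    simpa using this
  have h2 : HasFDerivAt (fun w => fderiv ℝ f w I) (H.flip I) z := by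
    have := hΦ.clm_apply (hasFDerivAt_const (I : ℂ) z)
    simpa using this
  have h3 : HasFDerivAt (wdzbar f)
      ((2 : ℂ)⁻¹ • (H.flip 1 + I • H.flip I)) z := by
    unfold wdzbar
    simp only [div_eq_inv_mul]
    have := ((h1.add (h2.const_mul I)))
    have := this.const_mul ((2:ℂ)⁻¹)
    exact this
  have hsymm : H 1 I = H I 1 := (hf.isSymmSndFDerivAt (by rw [minSmoothness_of_isRCLikeNormedField]; exact WithTop.coe_le_coe.2 le_top)) 1 I
  unfold wdz
  rw [h3.fderiv]
  simp [hsymm]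
  have : I * (2⁻¹ * (H I) 1 + 2⁻¹ * (I * (H I) I)) = 2⁻¹ * (I * H I 1) + 2⁻¹ * (I^2 * H I I) := by ring
  rw [this, I_sq]
  ring

lemma snd_fderiv_ofReal (u : ℂ → ℝ) (z : ℂ) (hu : ContDiffAt ℝ (⊤ : ℕ∞) u z) (v w : ℂ) :
    fderiv ℝ (fderiv ℝ (fun x => ((u x : ℝ) : ℂ))) z v w
      = ((fderiv ℝ (fderiv ℝ u) z v w : ℝ) : ℂ) := by
  have hu2 : ContDiffAt ℝ 2 u z := hu.of_le (WithTop.coe_le_coe.2 le_top)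
  have hev : ∀ᶠ y in nhds z, DifferentiableAt ℝ u y := by
    filter_upwards [hu2.eventually (by simp)] with y hy
    exact hy.differentiableAt two_ne_zero
  have hEq : (fun y => fderiv ℝ (fun x => ((u x : ℝ) : ℂ)) y)
      =ᶠ[nhds z] fun y => Complex.ofRealCLM.comp (fderiv ℝ u y) := by
    filter_upwards [hev] with y hy
    exact (Complex.ofRealCLM.hasFDerivAt.comp y hy.hasFDerivAt).fderiv
  rw [hEq.fderiv_eq]
  have hd : DifferentiableAt ℝ (fderiv ℝ u) z :=
    (hu.fderiv_right (m := (⊤ : ℕ∞)) (by simp)).differentiableAt (by simp)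
  have : fderiv ℝ (fun y => Complex.ofRealCLM.comp (fderiv ℝ u y)) z
      = (ContinuousLinearMap.compL ℝ ℂ ℝ ℂ Complex.ofRealCLM).comp
          (fderiv ℝ (fderiv ℝ u) z) := by
    exact ((ContinuousLinearMap.compL ℝ ℂ ℝ ℂ Complex.ofRealCLM).hasFDerivAt.comp z
      hd.hasFDerivAt).fderiv
  rw [this]
  simp

lemma rot_second (u : ℂ → ℝ) (hrotu : ∀ z w : ℂ, ‖z‖ = ‖w‖ → u z = u w)
    (r₀ : ℝ) (hu : ∀ z ∈ Metric.ball (0:ℂ) r₀, ContDiffAt ℝ (⊤ : ℕ∞) u z)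
    (z : ℂ) (hz : z ∈ Metric.ball (0:ℂ) r₀) :
    fderiv ℝ (fderiv ℝ u) z (I*z) (I*z) = fderiv ℝ u z z := by
  set c : ℝ → ℂ := fun θ => Complex.exp (θ * I) * z with hcdef
  have hc : ∀ θ : ℝ, HasDerivAt c (I * c θ) θ := by
    intro θ
    have h1 : HasDerivAt (fun θ : ℝ => (θ : ℂ)) 1 θ := by
      simpa using (hasDerivAt_id θ).ofReal_comp
    have h2 : HasDerivAt (fun θ : ℝ => (θ : ℂ) * I) I θ := by simpa using h1.mul_const I
    have h3 := (h2.cexp).mul_const z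
    refine h3.congr_deriv ?_
    simp only [hcdef]; ring
  have habs : ∀ θ : ℝ, ‖c θ‖ = ‖z‖ := by
    intro θ; simp [hcdef, Complex.norm_exp]
  have hmem : ∀ θ : ℝ, c θ ∈ Metric.ball (0:ℂ) r₀ := by
    intro θ
    simpa [Metric.mem_ball, Complex.dist_eq, habs θ] using
      (by simpa [Metric.mem_ball, Complex.dist_eq] using hz : ‖z‖ < r₀)
  have hc0 : c 0 = z := by simp [hcdef]
  have step1 : ∀ θ : ℝ, fderiv ℝ u (c θ) (I * c θ) = 0 := by
    intro θ
    have hdiff : DifferentiableAt ℝ u (c θ) := ((hu _ (hmem θ)).differentiableAt (by simp))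
    have hd : HasDerivAt (fun θ => u (c θ)) (fderiv ℝ u (c θ) (I * c θ)) θ :=
      hdiff.hasFDerivAt.comp_hasDerivAt θ (hc θ)
    have hcst : (fun θ => u (c θ)) = fun _ => u z := funext fun θ => hrotu _ _ (habs θ)
    rw [hcst] at hd
    exact hd.unique (hasDerivAt_const _ _)
  have hΦd : DifferentiableAt ℝ (fderiv ℝ u) z :=
    ((hu z hz).fderiv_right (m := (⊤ : ℕ∞)) (by simp)).differentiableAt (by simp)
  have hΦ : HasFDerivAt (fderiv ℝ u) (fderiv ℝ (fderiv ℝ u) z) z := hΦd.hasFDerivAt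
  have hg1 : HasDerivAt (fun θ => fderiv ℝ u (c θ)) (fderiv ℝ (fderiv ℝ u) z (I * z)) 0 := by
    have := hΦ.comp_hasDerivAt_of_eq 0 (hc 0) hc0.symm
    rw [hc0] at this; exact this
  have hg2 : HasDerivAt (fun θ => I * c θ) (I * (I * z)) 0 := by
    have := (hc 0).const_mul I
    rw [hc0] at this; exact this
  have hg := hg1.clm_apply hg2
  rw [hc0] at hg
  have hgz : (fun θ => fderiv ℝ u (c θ) (I * c θ)) = fun _ => (0:ℝ) := funext step1
  rw [hgz] at hg
  have h0 := (hasDerivAt_const (0:ℝ) (0:ℝ)).unique hg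
  have hneg : I * (I * z) = -z := by
    rw [← mul_assoc, I_mul_I]; ring
  rw [hneg, map_neg] at h0
  linarith

lemma gronwall_zero (W W' k : ℝ → ℝ) (R c : ℝ) (hR : 0 ≤ R) (hc : 0 < c)
    (hW : ∀ r ∈ Icc 0 R, HasDerivAt W (W' r) r)
    (hQ : ∀ r ∈ Icc 0 R, HasDerivAt (fun s => s * W' s) (k r) r)
    (hW'cont : ContinuousOn W' (Icc 0 R))
    (hkcont : ContinuousOn k (Icc 0 R))
    (hbound : ∀ r ∈ Icc 0 R, |k r| ≤ c * |W r|)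
    (hW0 : W 0 = 0) : ∀ r ∈ Icc 0 R, W r = 0 := by
  have hWcont : ContinuousOn W (Icc 0 R) := fun r hr => ((hW r hr).continuousAt).continuousWithinAt
  set δ : ℝ := 1 / (2 * c) with hδdef
  have hδ : 0 < δ := by positivity
  -- the step
  have step : ∀ r₁ ∈ Icc 0 R, (∀ t ∈ Icc 0 r₁, W t = 0) →
      ∀ t ∈ Icc 0 (min R (r₁ + δ)), W t = 0 := by
    intro r₁ hr₁ hzero
    set r₂ := min R (r₁ + δ) with hr₂def
    have hr₁R : r₁ ≤ R := hr₁.2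
    have hr₁0 : 0 ≤ r₁ := hr₁.1
    have hr₂R : r₂ ≤ R := min_le_left _ _
    have hr₁₂ : r₁ ≤ r₂ := le_min hr₁R (by linarith)
    have hsub : Icc r₁ r₂ ⊆ Icc 0 R := Icc_subset_Icc hr₁0 hr₂R
    -- max of |W| on [r₁, r₂]
    obtain ⟨x₀, hx₀, hmax'⟩ := isCompact_Icc.exists_isMaxOn (nonempty_Icc.2 hr₁₂)
      ((hWcont.mono hsub).abs)
    have hmax : ∀ y ∈ Icc r₁ r₂, |W y| ≤ |W x₀| := fun y hy => hmax' hy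
    set A := |W x₀| with hA
    have hA0 : 0 ≤ A := abs_nonneg _
    -- integral identities
    have hint : ∀ s₁ ∈ Icc 0 R, ∀ s₂ ∈ Icc 0 R, s₁ ≤ s₂ →
        IntervalIntegrable k MeasureTheory.volume s₁ s₂ := by
      intro s₁ hs₁ s₂ hs₂ h12
      exact (hkcont.mono (by rw [uIcc_of_le h12]; exact Icc_subset_Icc hs₁.1 hs₂.2)).intervalIntegrable
    have hk0 : ∀ t ∈ Icc 0 r₁, k t = 0 := by
      intro t ht
      have := hbound t (Icc_subset_Icc le_rfl hr₁R ht)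
      rw [hzero t ht] at this
      simp only [abs_zero, mul_zero] at this
      exact abs_eq_zero.1 (le_antisymm this (abs_nonneg _))
    have hQint : ∀ s ∈ Icc r₁ r₂, s * W' s = ∫ t in r₁..s, k t := by
      intro s hs
      have hsIcc : s ∈ Icc 0 R := hsub hs
      have e1 : (∫ t in (0:ℝ)..s, k t) = s * W' s - 0 * W' 0 := by
        apply intervalIntegral.integral_eq_sub_of_hasDerivAt
        · intro x hx
          rw [uIcc_of_le (by linarith [hs.1] : (0:ℝ) ≤ s)] at hx
          exact hQ x ⟨hx.1, le_trans hx.2 hsIcc.2⟩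
        · exact hint 0 ⟨le_rfl, hR⟩ s hsIcc (by linarith [hs.1])
      have e2 : (∫ t in (0:ℝ)..s, k t) = (∫ t in (0:ℝ)..r₁, k t) + ∫ t in r₁..s, k t :=
        (intervalIntegral.integral_add_adjacent_intervals
          (hint 0 ⟨le_rfl, hR⟩ r₁ hr₁ hr₁0) (hint r₁ hr₁ s hsIcc hs.1)).symm
      have e3 : (∫ t in (0:ℝ)..r₁, k t) = 0 := by
        rw [intervalIntegral.integral_congr (g := fun _ => 0)
          (fun t ht => hk0 t (by rwa [uIcc_of_le hr₁0] at ht))]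
        simp
      rw [e2, e3] at e1
      simp only [zero_mul, sub_zero, zero_add] at e1
      linarith [e1]
    -- bound on W'
    have hW'bd : ∀ s ∈ Icc r₁ r₂, s > r₁ → |W' s| ≤ c * A := by
      intro s hs hs'
      have hs0 : 0 < s := lt_of_le_of_lt hr₁0 hs'
      have hQb : |s * W' s| ≤ c * A * |s - r₁| := by
        rw [hQint s hs]
        have hb : ∀ x ∈ Set.uIoc r₁ s, ‖k x‖ ≤ c * A := by
          intro x hx
          rw [uIoc_of_le (le_of_lt hs')] at hx
          have hxIcc : x ∈ Icc r₁ r₂ := ⟨le_of_lt hx.1, le_trans hx.2 hs.2⟩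
          rw [Real.norm_eq_abs]
          calc |k x| ≤ c * |W x| := hbound x (hsub hxIcc)
            _ ≤ c * A := by
                have := hmax x hxIcc
                nlinarith
        simpa [Real.norm_eq_abs] using
          intervalIntegral.norm_integral_le_of_norm_le_const hb
      have h1 : s * |W' s| ≤ c * A * (s - r₁) := by
        rw [_root_.abs_mul, _root_.abs_of_pos hs0,
          _root_.abs_of_nonneg (by linarith : (0:ℝ) ≤ s - r₁)] at hQb
        linarith [hQb]
      have h2 : s * |W' s| ≤ s * (c * A) := by nlinarith [mul_nonneg (mul_nonneg hc.le hA0) hr₁0]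
      exact le_of_mul_le_mul_left h2 hs0
    have hWbd : ∀ t ∈ Icc r₁ r₂, |W t| ≤ c * A * δ := by
      intro t ht
      have hsubt : uIcc r₁ t ⊆ Icc 0 R := by
        rw [uIcc_of_le ht.1]
        exact fun x hx => hsub ⟨hx.1, le_trans hx.2 ht.2⟩
      have e : W t - W r₁ = ∫ s in r₁..t, W' s := by
        symm
        apply intervalIntegral.integral_eq_sub_of_hasDerivAt
        · intro x hx
          exact hW x (hsubt hx)
        · exact (hW'cont.mono hsubt).intervalIntegrable
      have hWr₁ : W r₁ = 0 := hzero r₁ ⟨hr₁0, le_rfl⟩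
      have hb : ∀ x ∈ Set.uIoc r₁ t, ‖W' x‖ ≤ c * A := by
        intro x hx
        rw [uIoc_of_le ht.1] at hx
        rw [Real.norm_eq_abs]
        exact hW'bd x ⟨hx.1.le, le_trans hx.2 ht.2⟩ hx.1
      have hnb := intervalIntegral.norm_integral_le_of_norm_le_const hb
      rw [← e, hWr₁, sub_zero, Real.norm_eq_abs] at hnb
      have htr : |t - r₁| ≤ δ := by
        rw [_root_.abs_of_nonneg (by linarith [ht.1] : (0:ℝ) ≤ t - r₁)]
        have := le_trans ht.2 (min_le_right R (r₁ + δ))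
        linarith
      calc |W t| ≤ c * A * |t - r₁| := hnb
        _ ≤ c * A * δ := by nlinarith [mul_nonneg hc.le hA0]
    have hcδ : c * δ = 1 / 2 := by rw [hδdef]; field_simp
    have hAzero : A = 0 := by
      have h1 : A ≤ c * A * δ := by rw [hA]; exact hWbd x₀ hx₀
      nlinarith
    intro t ht
    rcases le_or_gt t r₁ with h | h
    · exact hzero t ⟨ht.1, h⟩
    · have h2 : |W t| ≤ A := hmax t ⟨h.le, ht.2⟩
      rw [hAzero] at h2
      exact abs_eq_zero.1 (le_antisymm h2 (abs_nonneg _))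
  have main : ∀ n : ℕ, ∀ t ∈ Icc 0 (min R ((n : ℝ) * δ)), W t = 0 := by
    intro n
    induction n with
    | zero =>
      intro t ht
      have h2 : t ≤ 0 := le_trans ht.2 (by simp [min_le_right])
      have : t = 0 := le_antisymm h2 ht.1
      rw [this, hW0]
    | succ n ih =>
      have hr₁mem : min R ((n:ℝ) * δ) ∈ Icc 0 R :=
        ⟨le_min hR (by positivity), min_le_left _ _⟩
      have hstep := step _ hr₁mem ih
      intro t ht
      apply hstep
      refine ⟨ht.1, le_trans ht.2 ?_⟩
      rcases le_total R ((n:ℝ) * δ) with h | h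
      · rw [min_eq_left h]
        refine le_min (min_le_left _ _) ?_
        push_cast
        linarith [min_le_left R (((n:ℝ)+1) * δ), hδ]
      · rw [min_eq_right h]
        apply min_le_min le_rfl
        push_cast
        linarith
  intro r hr
  obtain ⟨n, hn⟩ := exists_nat_ge (R / δ)
  have hRn : R ≤ (n:ℝ) * δ := by
    rw [div_le_iff₀ hδ] at hn
    linarith
  exact main n r (by rwa [min_eq_left hRn])

lemma exp_lip {a b C : ℝ} (ha : a ≤ C) (hb : b ≤ C) :
    |Real.exp a - Real.exp b| ≤ Real.exp C * |a - b| := by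
  have key : ∀ x y : ℝ, y ≤ x → x ≤ C → Real.exp x - Real.exp y ≤ Real.exp C * (x - y) := by
    intro x y hyx hxC
    have h1 : y - x + 1 ≤ Real.exp (y - x) := Real.add_one_le_exp (y - x)
    have h2 : Real.exp y = Real.exp x * Real.exp (y - x) := by
      rw [← Real.exp_add]; ring_nf
    have h3 : Real.exp x - Real.exp y ≤ Real.exp x * (x - y) := by
      rw [h2]; nlinarith [Real.exp_pos x]
    have h4 : Real.exp x ≤ Real.exp C := Real.exp_le_exp.2 hxC
    nlinarith [Real.exp_pos x]
  rcases le_total b a with h | h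
  · rw [_root_.abs_of_nonneg (by nlinarith [Real.exp_le_exp.2 h] : (0:ℝ) ≤ Real.exp a - Real.exp b),
      _root_.abs_of_nonneg (by linarith : (0:ℝ) ≤ a - b)]
    exact key a b h ha
  · rw [_root_.abs_of_nonpos (by nlinarith [Real.exp_le_exp.2 h] : Real.exp a - Real.exp b ≤ 0),
      _root_.abs_of_nonpos (by linarith : a - b ≤ 0)]
    have := key b a h hb
    linarith

lemma hasDerivAt_comp_ofReal (u : ℂ → ℝ) (r : ℝ) (h : DifferentiableAt ℝ u (r:ℂ)) :
    HasDerivAt (fun t : ℝ => u (t:ℂ)) (fderiv ℝ u (r:ℂ) 1) r := by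
  have hco : HasDerivAt (fun t : ℝ => (t : ℂ)) 1 r := by
    simpa using (hasDerivAt_id r).ofReal_comp
  exact h.hasFDerivAt.comp_hasDerivAt r hco

lemma hasDerivAt_comp_ofReal' (u : ℂ → ℝ) (r : ℝ) (hu : ContDiffAt ℝ (⊤ : ℕ∞) u (r:ℂ)) :
    HasDerivAt (fun t : ℝ => fderiv ℝ u ((t:ℂ)) 1) (fderiv ℝ (fderiv ℝ u) (r:ℂ) 1 1) r := by
  have hΦd : DifferentiableAt ℝ (fderiv ℝ u) (r:ℂ) :=
    (hu.fderiv_right (m := (⊤ : ℕ∞)) (by simp)).differentiableAt (by simp)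
  have hco : HasDerivAt (fun t : ℝ => (t : ℂ)) 1 r := by
    simpa using (hasDerivAt_id r).ofReal_comp
  have h1 : HasDerivAt (fun t : ℝ => fderiv ℝ u ((t:ℂ))) (fderiv ℝ (fderiv ℝ u) (r:ℂ) 1) r := by
    exact hΦd.hasFDerivAt.comp_hasDerivAt r hco
  have h2 := h1.clm_apply (hasDerivAt_const r (1 : ℂ))
  simpa using h2

noncomputable def qf (ρ r : ℝ) : ℝ := 1 + ρ / 2 * r ^ 2
noncomputable def Vf (ρ r : ℝ) : ℝ := -2 * Real.log (qf ρ r)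
noncomputable def Vf' (ρ r : ℝ) : ℝ := -2 * ρ * r / qf ρ r
noncomputable def DVf' (ρ r : ℝ) : ℝ := (-2 * ρ * qf ρ r + 2 * ρ * r * (ρ * r)) / (qf ρ r) ^ 2

lemma hasDerivAt_qf (ρ r : ℝ) : HasDerivAt (qf ρ) (ρ * r) r := by
  have h : HasDerivAt (fun r : ℝ => 1 + ρ / 2 * r ^ 2) (ρ / 2 * (2 * r)) r := by
    simpa using ((hasDerivAt_pow 2 r).const_mul (ρ/2)).const_add 1
  unfold qf; convert h using 1; ring

lemma hasDerivAt_Vf {ρ r : ℝ} (hq : 0 < qf ρ r) : HasDerivAt (Vf ρ) (Vf' ρ r) r := by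
  have h := ((hasDerivAt_qf ρ r).log (ne_of_gt hq)).const_mul (-2 : ℝ)
  refine h.congr_deriv ?_
  unfold Vf'; ring

lemma hasDerivAt_Vf' {ρ r : ℝ} (hq : 0 < qf ρ r) : HasDerivAt (Vf' ρ) (DVf' ρ r) r := by
  have hnum : HasDerivAt (fun r : ℝ => -2 * ρ * r) (-2 * ρ) r := by
    simpa using (hasDerivAt_id r).const_mul (-2 * ρ)
  have h := hnum.div (hasDerivAt_qf ρ r) (ne_of_gt hq)
  refine h.congr_deriv ?_
  unfold DVf' qf
  field_simp
  ring

lemma exp_Vf {ρ r : ℝ} (hq : 0 < qf ρ r) : Real.exp (Vf ρ r) = ((qf ρ r) ^ 2)⁻¹ := by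
  unfold Vf
  rw [show (-2 : ℝ) * Real.log (qf ρ r) = -(Real.log (qf ρ r) + Real.log (qf ρ r)) by ring,
    Real.exp_neg, Real.exp_add, Real.exp_log hq]
  ring_nf

lemma Vf_ode {ρ r : ℝ} (hq : 0 < qf ρ r) :
    r * DVf' ρ r + Vf' ρ r = -(4 * ρ) * r * Real.exp (Vf ρ r) := by
  rw [exp_Vf hq]
  unfold DVf' Vf'
  have hne : qf ρ r ≠ 0 := ne_of_gt hq
  field_simp [hne]
  unfold qf
  ring

/-- Uniqueness of the rotationally symmetric solution of the Liouville equation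
∂²(log g₁)/∂z∂z̄ = -ρ·g₁ with g₁(0) = 1, ∂g₁/∂z(0) = 0, on the disk |z| ≤ r₀,
for ρ < 0 and 0 < r₀ < √(2/|ρ|): it must equal (1 + (ρ/2)|z|²)^{-2}. -/
theorem stmt3 (ρ : ℝ) (hρ : ρ < 0) (r₀ : ℝ) (hr₀ : 0 < r₀)
    (hr₀' : r₀ < Real.sqrt (2 / |ρ|))
    (g₁ : ℂ → ℝ)
    (hpos : ∀ z ∈ Metric.closedBall (0 : ℂ) r₀, 0 < g₁ z)
    (hsmooth : ContDiffOn ℝ (⊤ : ℕ∞) g₁ (Metric.closedBall (0 : ℂ) r₀))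
    (hrot : ∀ z w : ℂ, ‖z‖ = ‖w‖ → g₁ z = g₁ w)
    (hpde : ∀ z ∈ Metric.closedBall (0 : ℂ) r₀,
      wdz (wdzbar (fun w : ℂ => ((Real.log (g₁ w) : ℝ) : ℂ))) z = -ρ * g₁ z)
    (h0 : g₁ 0 = 1)
    (hd0 : wdz (fun w : ℂ => ((g₁ w : ℝ) : ℂ)) 0 = 0) :
    ∀ z ∈ Metric.closedBall (0 : ℂ) r₀,
      g₁ z = (1 + ρ / 2 * ‖z‖ ^ 2) ^ (-2 : ℝ) := by
  have habsρ : |ρ| = -ρ := abs_of_neg hρ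
  have hsq : r₀ ^ 2 < 2 / (-ρ) := by
    rw [← habsρ]
    exact (Real.lt_sqrt hr₀.le).1 hr₀'
  have hρr : -ρ * r₀ ^ 2 < 2 := by
    rw [lt_div_iff₀ (by linarith : (0:ℝ) < -ρ)] at hsq
    linarith
  have hqpos : ∀ r : ℝ, |r| ≤ r₀ → 0 < qf ρ r := by
    intro r hr
    unfold qf
    nlinarith [_root_.sq_abs r, sq_nonneg r, sq_nonneg r₀, abs_nonneg r,
      mul_self_le_mul_self (abs_nonneg r) hr]
  have hBsub : Metric.ball (0:ℂ) r₀ ⊆ Metric.closedBall (0:ℂ) r₀ := Metric.ball_subset_closedBall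
  set u : ℂ → ℝ := fun w => Real.log (g₁ w) with hudef
  have hg : ∀ z ∈ Metric.ball (0:ℂ) r₀, ContDiffAt ℝ (⊤ : ℕ∞) g₁ z := fun z hz =>
    hsmooth.contDiffAt (Filter.mem_of_superset (Metric.isOpen_ball.mem_nhds hz) hBsub)
  have hu : ∀ z ∈ Metric.ball (0:ℂ) r₀, ContDiffAt ℝ (⊤ : ℕ∞) u z := fun z hz =>
    (hg z hz).log (ne_of_gt (hpos z (hBsub hz)))
  have hrotu : ∀ z w : ℂ, ‖z‖ = ‖w‖ → u z = u w := by
    intro z w h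
    simp only [hudef]
    rw [hrot z w h]
  -- real form of the PDE
  have hpdeR : ∀ z ∈ Metric.ball (0:ℂ) r₀,
      fderiv ℝ (fderiv ℝ u) z 1 1 + fderiv ℝ (fderiv ℝ u) z I I = -(4*ρ) * g₁ z := by
    intro z hz
    have h1 := hpde z (hBsub hz)
    have hf : ContDiffAt ℝ (⊤ : ℕ∞) (fun w : ℂ => ((u w : ℝ) : ℂ)) z :=
      Complex.ofRealCLM.contDiff.contDiffAt.comp z (hu z hz)
    rw [wdz_wdzbar_eq _ z hf] at h1
    rw [snd_fderiv_ofReal u z (hu z hz) 1 1, snd_fderiv_ofReal u z (hu z hz) I I] at h1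
    have h2 : ((fderiv ℝ (fderiv ℝ u) z 1 1 + fderiv ℝ (fderiv ℝ u) z I I : ℝ) : ℂ)
        = ((-(4*ρ) * g₁ z : ℝ) : ℂ) := by
      push_cast
      linear_combination 4 * h1
    exact_mod_cast h2
  -- radial functions
  set U : ℝ → ℝ := fun r => u ((r:ℝ):ℂ) with hUdef
  set U' : ℝ → ℝ := fun r => fderiv ℝ u (((r:ℝ):ℂ)) 1 with hU'def
  have hmemr : ∀ r : ℝ, |r| < r₀ → ((r:ℂ) ∈ Metric.ball (0:ℂ) r₀) := by
    intro r hr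
    simpa [Metric.mem_ball, Complex.dist_eq, Complex.norm_real] using hr
  have hUd : ∀ r : ℝ, |r| < r₀ → HasDerivAt U (U' r) r := fun r hr =>
    hasDerivAt_comp_ofReal u r ((hu _ (hmemr r hr)).differentiableAt (by simp))
  have hU'd : ∀ r : ℝ, |r| < r₀ →
      HasDerivAt U' (fderiv ℝ (fderiv ℝ u) ((r:ℂ)) 1 1) r := fun r hr =>
    hasDerivAt_comp_ofReal' u r (hu _ (hmemr r hr))
  -- U'(0) = 0
  have hU'0 : U' 0 = 0 := by
    have heven : (fun r : ℝ => U (-r)) = U := by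
      funext r
      exact hrotu _ _ (by simp)
    have h1 : HasDerivAt U (U' 0) 0 := hUd 0 (by simpa using hr₀)
    have h2 : HasDerivAt (fun r : ℝ => U (-r)) (U' 0 * (-1)) 0 := by
      have h1' : HasDerivAt U (U' 0) (-0 : ℝ) := by simpa using h1
      have := h1'.comp 0 (hasDerivAt_neg (0:ℝ))
      exact this
    rw [heven] at h2
    have := h1.unique h2
    linarith
  -- the radial ODE, multiplied by r
  have hODE : ∀ r : ℝ, |r| < r₀ →
      r * (fderiv ℝ (fderiv ℝ u) ((r:ℂ)) 1 1) + U' r = -(4*ρ) * r * Real.exp (U r) := by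
    intro r hr
    rcases eq_or_ne r 0 with rfl | hr0
    · simpa using hU'0
    · have h2 := rot_second u hrotu r₀ hu ((r:ℂ)) (hmemr r hr)
      have e1 : (I * (r:ℂ)) = r • I := by
        rw [Complex.real_smul]; ring
      have e2 : ((r:ℂ)) = r • (1:ℂ) := by
        rw [Complex.real_smul]; ring
      rw [e1] at h2
      nth_rewrite 3 [e2] at h2
      rw [ContinuousLinearMap.map_smul] at h2
      rw [ContinuousLinearMap.map_smul] at h2
      rw [ContinuousLinearMap.map_smul] at h2
      simp only [ContinuousLinearMap.coe_smul', Pi.smul_apply, smul_eq_mul] at h2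
      -- h2 : r * (r * (H I I)) = r * (fderiv u (r:ℂ) 1) = r * U' r
      have h2' : r * (fderiv ℝ (fderiv ℝ u) ((r:ℂ)) I I) = U' r := mul_left_cancel₀ hr0 h2
      have hII : fderiv ℝ (fderiv ℝ u) ((r:ℂ)) I I = U' r / r := by
        rw [eq_div_iff hr0]; linarith [h2']
      have h3 := hpdeR ((r:ℂ)) (hmemr r hr)
      rw [hII] at h3
      have hgpos : 0 < g₁ ((r:ℂ)) := hpos _ (hBsub (hmemr r hr))
      have hexp : Real.exp (U r) = g₁ ((r:ℂ)) := Real.exp_log hgpos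
      have h5 : fderiv ℝ (fderiv ℝ u) ((r:ℂ)) 1 1 = -(4*ρ) * g₁ ((r:ℂ)) - U' r / r := by
        linarith [h3]
      rw [h5, hexp]
      field_simp
      ring
  -- comparison on [0, R] for R < r₀
  have key : ∀ R : ℝ, 0 < R → R < r₀ → ∀ t ∈ Icc (0:ℝ) R, U t = Vf ρ t := by
    intro R hR0 hRr₀
    have habs_lt : ∀ t ∈ Icc (0:ℝ) R, |t| < r₀ := fun t ht => by
      rw [_root_.abs_of_nonneg ht.1]; linarith [ht.2]
    have habs_le : ∀ t ∈ Icc (0:ℝ) R, |t| ≤ r₀ := fun t ht => (habs_lt t ht).le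
    have hUc : ContinuousOn U (Icc 0 R) := fun t ht =>
      ((hUd t (habs_lt t ht)).continuousAt).continuousWithinAt
    have hVc : ContinuousOn (Vf ρ) (Icc 0 R) := fun t ht =>
      ((hasDerivAt_Vf (hqpos t (habs_le t ht))).continuousAt).continuousWithinAt
    obtain ⟨x₁, hx₁, hmax₁⟩ := isCompact_Icc.exists_isMaxOn (nonempty_Icc.2 hR0.le) (hUc.abs)
    obtain ⟨x₂, hx₂, hmax₂⟩ := isCompact_Icc.exists_isMaxOn (nonempty_Icc.2 hR0.le) (hVc.abs)
    set C := max |U x₁| |Vf ρ x₂| with hC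
    have hUC : ∀ t ∈ Icc (0:ℝ) R, U t ≤ C := fun t ht =>
      le_trans (le_abs_self _) (le_trans (hmax₁ ht) (le_max_left _ _))
    have hVC : ∀ t ∈ Icc (0:ℝ) R, Vf ρ t ≤ C := fun t ht =>
      le_trans (le_abs_self _) (le_trans (hmax₂ ht) (le_max_right _ _))
    set L := Real.exp C with hL
    have hρpos : (0:ℝ) < -ρ := by linarith
    set c := 4 * (-ρ) * L * R + 1 with hc
    have hcpos : 0 < c := by positivity
    set W := fun t => U t - Vf ρ t with hW
    set W' := fun t => U' t - Vf' ρ t with hW'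
    set k := fun t => -(4*ρ) * t * (Real.exp (U t) - Real.exp (Vf ρ t)) with hk
    have hWd : ∀ r ∈ Icc (0:ℝ) R, HasDerivAt W (W' r) r := fun r hrm =>
      (hUd r (habs_lt r hrm)).sub (hasDerivAt_Vf (hqpos r (habs_le r hrm)))
    have hW'd : ∀ r ∈ Icc (0:ℝ) R,
        HasDerivAt W' ((fderiv ℝ (fderiv ℝ u) ((r:ℂ)) 1 1) - DVf' ρ r) r := fun r hrm =>
      (hU'd r (habs_lt r hrm)).sub (hasDerivAt_Vf' (hqpos r (habs_le r hrm)))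
    have hQd : ∀ r ∈ Icc (0:ℝ) R, HasDerivAt (fun s => s * W' s) (k r) r := by
      intro r hrm
      have hp := (hasDerivAt_id r).mul (hW'd r hrm)
      have hode := hODE r (habs_lt r hrm)
      have hvode := Vf_ode (hqpos r (habs_le r hrm))
      have heq : 1 * W' r + r * ((fderiv ℝ (fderiv ℝ u) ((r:ℂ)) 1 1) - DVf' ρ r) = k r := by
        simp only [hk, hW']
        linear_combination hode - hvode
      rw [← heq]
      exact hp
    have hW'c : ContinuousOn W' (Icc 0 R) := fun r hrm =>
      ((hW'd r hrm).continuousAt).continuousWithinAt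
    have hkc : ContinuousOn k (Icc 0 R) := by
      apply ContinuousOn.mul
      · exact continuousOn_const.mul continuous_id.continuousOn
      · exact (Real.continuous_exp.comp_continuousOn hUc).sub
          (Real.continuous_exp.comp_continuousOn hVc)
    have hbound : ∀ r ∈ Icc (0:ℝ) R, |k r| ≤ c * |W r| := by
      intro r hrm
      have h1 : |Real.exp (U r) - Real.exp (Vf ρ r)| ≤ L * |U r - Vf ρ r| :=
        exp_lip (hUC r hrm) (hVC r hrm)
      have habsk : |k r| = (4*(-ρ)) * (|r| * |Real.exp (U r) - Real.exp (Vf ρ r)|) := by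
        simp only [hk]
        rw [_root_.abs_mul, _root_.abs_mul,
          show |(-(4*ρ))| = 4*(-ρ) by rw [_root_.abs_of_pos (by linarith : (0:ℝ) < -(4*ρ))]; ring,
          mul_assoc]
      rw [habsk]
      have hr1 : |r| ≤ R := by rw [_root_.abs_of_nonneg hrm.1]; exact hrm.2
      have h2 : |r| * |Real.exp (U r) - Real.exp (Vf ρ r)| ≤ R * (L * |U r - Vf ρ r|) :=
        mul_le_mul hr1 h1 (abs_nonneg _) hR0.le
      have h3 : (4*(-ρ)) * (|r| * |Real.exp (U r) - Real.exp (Vf ρ r)|)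
          ≤ (4*(-ρ)) * (R * (L * |U r - Vf ρ r|)) :=
        mul_le_mul_of_nonneg_left h2 (by linarith)
      have h4 : (4*(-ρ)) * (R * (L * |U r - Vf ρ r|)) ≤ c * |U r - Vf ρ r| := by
        rw [hc]
        nlinarith [abs_nonneg (U r - Vf ρ r)]
      calc (4*(-ρ)) * (|r| * |Real.exp (U r) - Real.exp (Vf ρ r)|)
          ≤ (4*(-ρ)) * (R * (L * |U r - Vf ρ r|)) := h3
        _ ≤ c * |U r - Vf ρ r| := h4
        _ = c * |W r| := by simp only [hW]
    have hU0 : U 0 = 0 := by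
      simp only [hUdef, hudef, Complex.ofReal_zero]
      rw [h0, Real.log_one]
    have hV0 : Vf ρ 0 = 0 := by unfold Vf qf; norm_num
    have hW0 : W 0 = 0 := by simp only [hW]; rw [hU0, hV0]; ring
    have hzero := gronwall_zero W W' k R c hR0.le hcpos hWd hQd hW'c hkc hbound hW0
    intro t ht
    have := hzero t ht
    simp only [hW] at this
    linarith
  -- conclusion
  intro z hz
  have hzabs : ‖z‖ ≤ r₀ := by
    simpa [Metric.mem_closedBall, Complex.dist_eq] using hz
  have hrotg : g₁ z = g₁ ((‖z‖ : ℝ) : ℂ) := by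
    apply hrot
    rw [Complex.norm_real, Real.norm_eq_abs, _root_.abs_of_nonneg (norm_nonneg z)]
  rw [hrotg]
  have hG : ∀ t : ℝ, 0 ≤ t → t < r₀ → g₁ ((t:ℝ):ℂ) = (1 + ρ/2 * t^2) ^ (-2:ℝ) := by
    intro t ht htlt
    have h1 : U t = Vf ρ t := key ((t + r₀)/2) (by linarith) (by linarith) t ⟨ht, by linarith⟩
    have hqt : 0 < qf ρ t := hqpos t (by rw [_root_.abs_of_nonneg ht]; linarith)
    have hgpos : 0 < g₁ ((t:ℂ)) := hpos _ (hBsub (hmemr t (by rwa [_root_.abs_of_nonneg ht])))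
    have h2 : g₁ ((t:ℂ)) = Real.exp (U t) := (Real.exp_log hgpos).symm
    rw [h2, h1]
    rw [show (1 + ρ/2 * t^2) = qf ρ t from rfl, Real.rpow_def_of_pos hqt]
    unfold Vf
    ring_nf
  rcases lt_or_eq_of_le hzabs with hlt | heq
  · exact hG _ (norm_nonneg z) hlt
  · rw [heq]
    have hF : ContinuousWithinAt (fun s : ℝ => g₁ ((s:ℝ):ℂ)) (Ico 0 r₀) r₀ := by
      have hmap : Set.MapsTo (fun s : ℝ => ((s:ℝ):ℂ)) (Icc 0 r₀) (Metric.closedBall (0:ℂ) r₀) := by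
        intro s hs
        simp [Metric.mem_closedBall, Complex.dist_eq, Complex.norm_real,
          _root_.abs_of_nonneg hs.1, hs.2]
      have hcomp := hsmooth.continuousOn.comp (Complex.continuous_ofReal.continuousOn) hmap
      exact (hcomp r₀ ⟨hr₀.le, le_rfl⟩).mono Ico_subset_Icc_self
    have hGc : ContinuousWithinAt (fun s : ℝ => (1 + ρ/2 * s^2) ^ (-2:ℝ)) (Ico 0 r₀) r₀ := by
      apply ContinuousAt.continuousWithinAt
      apply ContinuousAt.rpow_const
      · exact (continuous_const.add (continuous_const.mul (continuous_pow 2))).continuousAt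
      · left
        exact ne_of_gt (hqpos r₀ (by rw [_root_.abs_of_nonneg hr₀.le]))
    have hmemcl : r₀ ∈ closure (Ico (0:ℝ) r₀) := by
      rw [closure_Ico (by linarith : (0:ℝ) ≠ r₀)]
      exact ⟨hr₀.le, le_rfl⟩
    haveI hne : (nhdsWithin r₀ (Ico (0:ℝ) r₀)).NeBot := mem_closure_iff_nhdsWithin_neBot.1 hmemcl
    have heq2 : Filter.Tendsto (fun s : ℝ => g₁ ((s:ℝ):ℂ)) (nhdsWithin r₀ (Ico (0:ℝ) r₀))
        (nhds ((1 + ρ/2 * r₀^2) ^ (-2:ℝ))) := by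
      apply Filter.Tendsto.congr' _ hGc
      filter_upwards [self_mem_nhdsWithin] with s hs
      exact (hG s hs.1 hs.2).symm
    exact tendsto_nhds_unique hF heq2
end

section
/- For m > max{|ρ|^{4/3}, 10} with (log m)/√m < √(2/|ρ|), the quantity λ₀² defined by λ₀^{-2} = 2∫₀^{(log m)/√m}(1+(ρ/2)r²)^{-2m/ρ-2} r dr satisfies λ₀² = (m + ρ/2)(1 + O(e^{-(log m)²})); i.e., there is a constant C with |λ₀²/(m + ρ/2) - 1| ≤ C e^{-(log m)²}. -/
/-!
The substitution `v = 1 + (ρ/2) r²` makes the integrand exact, so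
`λ₀² = (m + ρ/2) / (1 - u)` with `u = (1 + a s)^(-(1+a)/a)`, where `a = ρ/(2m)` and `s = (log m)²`.
The elementary bounds `y/(1+y) ≤ log (1+y) ≤ y` give `(1+a)/a · log (1 + a s) ≥ s - |a| s²`, and
`|a| s² = |ρ| (log m)⁴ / (2m)` stays bounded because `|ρ| < m^{3/4}` and `(log m)⁴ = O(m^{1/4})`.
Hence `u = O(e^{-s})`, while `|a| s < 1` (the hypothesis on `log m / √m`) keeps `u ≤ 1/2`.
-/

namespace Real

lemma one_add_mul_sq_pos_of_mem_uIcc {b T r : ℝ} (hT : 0 < 1 + b * T ^ 2)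
    (hr : r ∈ Set.uIcc 0 T) : 0 < 1 + b * r ^ 2 := by
  have hrT : r ^ 2 ≤ T ^ 2 := by
    rcases Set.mem_uIcc.mp hr with ⟨h0, hT⟩ | ⟨hT, h0⟩ <;> nlinarith
  rcases le_or_gt 0 b with hb | hb
  · positivity
  · nlinarith

lemma integral_one_add_mul_sq_rpow_mul {b c T : ℝ} (hb : b ≠ 0) (hc : c ≠ -1)
    (hT : 0 < 1 + b * T ^ 2) :
    ∫ r in (0 : ℝ)..T, (1 + b * r ^ 2) ^ c * r =
      ((1 + b * T ^ 2) ^ (c + 1) - 1) / (2 * b * (c + 1)) := by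
  have hc1 : c + 1 ≠ 0 := fun h => hc (by linarith)
  have hpos := fun r (hr : r ∈ Set.uIcc 0 T) => one_add_mul_sq_pos_of_mem_uIcc hT hr
  have hderiv : ∀ r ∈ Set.uIcc 0 T, HasDerivAt
      (fun s : ℝ => (1 + b * s ^ 2) ^ (c + 1) / (2 * b * (c + 1))) ((1 + b * r ^ 2) ^ c * r) r := by
    intro r hr
    have hbase : HasDerivAt (fun s : ℝ => 1 + b * s ^ 2) (b * (2 * r)) r := by
      simpa using ((hasDerivAt_pow 2 r).const_mul b).const_add 1
    refine ((hbase.rpow_const (Or.inl (hpos r hr).ne')).div_const _).congr_deriv ?_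
    rw [add_sub_cancel_right]
    field_simp
  have hcont : ContinuousOn (fun r : ℝ => (1 + b * r ^ 2) ^ c * r) (Set.uIcc 0 T) :=
    ((ContinuousOn.rpow_const (by fun_prop) fun r hr => Or.inl (hpos r hr).ne').mul
      continuousOn_id)
  rw [intervalIntegral.integral_eq_sub_of_hasDerivAt hderiv hcont.intervalIntegrable]
  simp [sub_div]

lemma inv_two_mul_integral_eq {ρ m T : ℝ} (hρ : ρ ≠ 0) (hM : m + ρ / 2 ≠ 0)
    (hT : 0 < 1 + ρ / 2 * T ^ 2) :
    (2 * ∫ r in (0 : ℝ)..T, (1 + ρ / 2 * r ^ 2) ^ (-(2 * m / ρ) - 2) * r)⁻¹ =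
      (m + ρ / 2) / (1 - (1 + ρ / 2 * T ^ 2) ^ (-(2 * m / ρ) - 1)) := by
  have hc : -(2 * m / ρ) - 2 ≠ -1 := by
    intro h
    field_simp at h
    exact hM (by linarith)
  rw [integral_one_add_mul_sq_rpow_mul (div_ne_zero hρ two_ne_zero) hc hT,
    show -(2 * m / ρ) - 2 + 1 = -(2 * m / ρ) - 1 by ring,
    show 2 * (ρ / 2) * (-(2 * m / ρ) - 1) = -(2 * (m + ρ / 2)) by field_simp; ring]
  set u := (1 + ρ / 2 * T ^ 2) ^ (-(2 * m / ρ) - 1)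
  rw [show 2 * ((u - 1) / -(2 * (m + ρ / 2))) = (1 - u) / (m + ρ / 2) by field_simp; ring,
    inv_div]

section

variable {a s : ℝ}

lemma one_add_mul_pos_of_abs_mul_lt_one (hs : 0 ≤ s) (has : |a| * s < 1) : 0 < 1 + a * s := by
  nlinarith [mul_le_mul_of_nonneg_right (neg_abs_le a) hs]

lemma div_le_div_mul_log_of_pos (ha : 0 < a) (hs : 0 ≤ s) :
    (1 + a) * s / (1 + a * s) ≤ (1 + a) / a * log (1 + a * s) := by
  have has : 0 < 1 + a * s := by positivity
  have hlog : a * s / (1 + a * s) ≤ log (1 + a * s) := by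
    have := one_sub_inv_le_log_of_pos has
    rwa [show 1 - (1 + a * s)⁻¹ = a * s / (1 + a * s) by field_simp; ring] at this
  calc (1 + a) * s / (1 + a * s) = (1 + a) / a * (a * s / (1 + a * s)) := by field_simp
    _ ≤ (1 + a) / a * log (1 + a * s) := by gcongr

lemma mul_le_div_mul_log_of_neg (ha : a < 0) (ha1 : 0 < 1 + a) (has : 0 < 1 + a * s) :
    (1 + a) * s ≤ (1 + a) / a * log (1 + a * s) := by
  have hlog : log (1 + a * s) ≤ a * s := by linarith [log_le_sub_one_of_pos has]
  calc (1 + a) * s = (1 + a) / a * (a * s) := by field_simp [ha.ne]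
    _ ≤ (1 + a) / a * log (1 + a * s) :=
      mul_le_mul_of_nonpos_left hlog (div_nonpos_of_nonneg_of_nonpos ha1.le ha.le)

lemma sub_abs_mul_sq_le_div_mul_log (ha : a ≠ 0) (hs : 1 ≤ s) (has : 0 < 1 + a * s) :
    s - |a| * s ^ 2 ≤ (1 + a) / a * log (1 + a * s) := by
  rcases ha.lt_or_gt with ha | ha
  · refine le_trans ?_ (mul_le_div_mul_log_of_neg ha (by nlinarith) has)
    rw [abs_of_neg ha]
    nlinarith [mul_nonneg (neg_nonneg.mpr ha.le) (by nlinarith : 0 ≤ s ^ 2 - s)]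
  · refine le_trans ?_ (div_le_div_mul_log_of_pos ha (by linarith))
    rw [abs_of_pos ha, le_div_iff₀ has]
    nlinarith [pow_pos ha 2, pow_pos (by linarith : (0:ℝ) < s) 3]

lemma half_le_div_mul_log (ha : a ≠ 0) (hs : 2 ≤ s) (has : |a| * s < 1) :
    s / 2 ≤ (1 + a) / a * log (1 + a * s) := by
  rcases ha.lt_or_gt with ha | ha
  · rw [abs_of_neg ha] at has
    refine le_trans ?_ (mul_le_div_mul_log_of_neg ha (by nlinarith) (by linarith))
    nlinarith
  · rw [abs_of_pos ha] at has
    refine le_trans ?_ (div_le_div_mul_log_of_pos ha (by linarith))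
    rw [le_div_iff₀ (by nlinarith)]
    nlinarith

lemma one_add_mul_rpow_le_exp_sub (ha : a ≠ 0) (hs : 1 ≤ s) (has : 0 < 1 + a * s) :
    (1 + a * s) ^ (-(1 + a) / a) ≤ exp (|a| * s ^ 2 - s) := by
  rw [rpow_def_of_pos has, exp_le_exp]
  have := sub_abs_mul_sq_le_div_mul_log ha hs has
  have : log (1 + a * s) * (-(1 + a) / a) = -((1 + a) / a * log (1 + a * s)) := by ring
  linarith

lemma one_add_mul_rpow_le_half (ha : a ≠ 0) (hs : 2 ≤ s) (has : |a| * s < 1) :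
    (1 + a * s) ^ (-(1 + a) / a) ≤ 1 / 2 := by
  rw [rpow_def_of_pos (one_add_mul_pos_of_abs_mul_lt_one (by linarith) has)]
  have := half_le_div_mul_log ha hs has
  have : log (1 + a * s) * (-(1 + a) / a) = -((1 + a) / a * log (1 + a * s)) := by ring
  calc exp (log (1 + a * s) * (-(1 + a) / a)) ≤ exp (-1) := exp_le_exp.mpr (by linarith)
    _ ≤ 1 / 2 := by
      rw [exp_neg, inv_le_comm₀ (exp_pos 1) (by norm_num)]
      linarith [add_one_le_exp 1]

end

lemma two_lt_log_of_ten_lt {x : ℝ} (hx : 10 < x) : 2 < log x := by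
  rw [lt_log_iff_exp_lt (by linarith), show (2 : ℝ) = 1 + 1 by norm_num, exp_add]
  nlinarith [exp_one_lt_d9, exp_pos 1]

-- `6144 = 4⁴ · 4!`, from the Taylor term `(log x / 4)⁴ / 4! ≤ exp (log x / 4)`.
lemma log_pow_four_le {x : ℝ} (hx : 1 ≤ x) : log x ^ 4 ≤ 6144 * x ^ (1 / 4 : ℝ) := by
  have := pow_div_factorial_le_exp _ (div_nonneg (log_nonneg hx) (by norm_num : (0 : ℝ) ≤ 4)) 4
  rw [rpow_def_of_pos (by linarith), show log x * (1 / 4) = log x / 4 by ring]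
  norm_num [Nat.factorial] at this
  linarith

lemma abs_mul_log_pow_four_le {y x : ℝ} (hyx : |y| ^ (4 / 3 : ℝ) < x) (hx : 1 ≤ x) :
    |y| * log x ^ 4 ≤ 6144 * x := by
  have hy : |y| < x ^ (3 / 4 : ℝ) := by
    calc |y| = (|y| ^ (4 / 3 : ℝ)) ^ (3 / 4 : ℝ) := by
          rw [← rpow_mul (abs_nonneg y)]; norm_num
      _ < x ^ (3 / 4 : ℝ) := rpow_lt_rpow (by positivity) hyx (by norm_num)
  calc |y| * log x ^ 4 ≤ x ^ (3 / 4 : ℝ) * (6144 * x ^ (1 / 4 : ℝ)) :=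
        mul_le_mul hy.le (log_pow_four_le hx) (by positivity) (by positivity)
    _ = 6144 * (x ^ (3 / 4 : ℝ) * x ^ (1 / 4 : ℝ)) := by ring
    _ = 6144 * x := by rw [← rpow_add (by linarith)]; norm_num

lemma abs_mul_sq_lt_of_div_sqrt_lt_sqrt {ρ m q : ℝ} (hρ : ρ ≠ 0) (hm : 0 < m) (hq : 0 ≤ q)
    (h : q / √m < √(2 / |ρ|)) : |ρ| * q ^ 2 < 2 * m := by
  rw [lt_sqrt (by positivity), div_pow, sq_sqrt hm.le,
    div_lt_div_iff₀ hm (abs_pos.mpr hρ)] at h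
  linarith

end Real

lemma abs_div_one_sub_div_sub_one_le {M u : ℝ} (hM : M ≠ 0) (hu0 : 0 ≤ u) (hu : u ≤ 1 / 2) :
    |M / (1 - u) / M - 1| ≤ 2 * u := by
  have h1u : 0 < 1 - u := by linarith
  rw [div_div_cancel_left' hM, show (1 - u)⁻¹ - 1 = u / (1 - u) by field_simp; ring,
    abs_of_nonneg (by positivity), div_le_iff₀ h1u]
  nlinarith

lemma abs_div_one_sub_rpow_div_sub_one_le {M a s K : ℝ} (hM : M ≠ 0) (ha : a ≠ 0) (hs : 2 ≤ s)
    (has : |a| * s < 1) (hK : |a| * s ^ 2 ≤ K) :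
    |M / (1 - (1 + a * s) ^ (-(1 + a) / a)) / M - 1| ≤ 2 * Real.exp K * Real.exp (-s) := by
  have hpos := Real.one_add_mul_pos_of_abs_mul_lt_one (by linarith) has
  calc _ ≤ 2 * (1 + a * s) ^ (-(1 + a) / a) :=
        abs_div_one_sub_div_sub_one_le hM (Real.rpow_nonneg hpos.le _)
          (Real.one_add_mul_rpow_le_half ha hs has)
    _ ≤ 2 * Real.exp (|a| * s ^ 2 - s) := by
        gcongr
        exact Real.one_add_mul_rpow_le_exp_sub ha (by linarith) hpos
    _ ≤ 2 * Real.exp K * Real.exp (-s) := by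
        rw [mul_assoc, ← Real.exp_add]
        gcongr
        linarith

/-- For m > max{|ρ|^{4/3}, 10} with (log m)/√m < √(2/|ρ|), the quantity λ₀² defined by
λ₀^{-2} = 2∫₀^{(log m)/√m}(1+(ρ/2)r²)^{-2m/ρ-2} r dr satisfies
λ₀² = (m + ρ/2)(1 + O(e^{-(log m)²})). -/
theorem stmt7 (ρ : ℝ) (hρ : ρ ≠ 0) :
    ∃ C > (0 : ℝ), ∀ m : ℕ,
      max (|ρ| ^ ((4 : ℝ) / 3)) 10 < (m : ℝ) →
      Real.log m / Real.sqrt m < Real.sqrt (2 / |ρ|) →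
      ∀ lamsq : ℝ,
        lamsq = (2 * ∫ r in (0 : ℝ)..(Real.log m / Real.sqrt m),
            (1 + ρ / 2 * r ^ 2) ^ (-(2 * (m : ℝ) / ρ) - 2) * r)⁻¹ →
        |lamsq / ((m : ℝ) + ρ / 2) - 1| ≤ C * Real.exp (-(Real.log m) ^ 2) := by
  refine ⟨2 * Real.exp 3072, by positivity, ?_⟩
  rintro m hm hT lamsq rfl
  set q := Real.log m
  set a := ρ / (2 * m)
  have hm10 : (10 : ℝ) < m := (le_max_right _ _).trans_lt hm
  have hq : 2 < q := Real.two_lt_log_of_ten_lt hm10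
  have hρq : |ρ| * q ^ 2 < 2 * m :=
    Real.abs_mul_sq_lt_of_div_sqrt_lt_sqrt hρ (by linarith) (by linarith) hT
  have hM : (m : ℝ) + ρ / 2 ≠ 0 := by
    nlinarith [neg_abs_le ρ, mul_le_mul_of_nonneg_left (by nlinarith : 4 ≤ q ^ 2) (abs_nonneg ρ)]
  have ha : a ≠ 0 := div_ne_zero hρ (by positivity)
  have habs : |a| = |ρ| / (2 * m) := by rw [abs_div, abs_of_pos (by positivity : (0 : ℝ) < 2 * m)]
  have haq : |a| * q ^ 2 < 1 := by
    rwa [habs, div_mul_eq_mul_div, div_lt_one (by positivity)]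
  have haq4 : |a| * (q ^ 2) ^ 2 ≤ 3072 := by
    rw [habs, div_mul_eq_mul_div, div_le_iff₀ (by positivity)]
    linear_combination Real.abs_mul_log_pow_four_le ((le_max_left _ _).trans_lt hm) (by linarith)
  have hx : ρ / 2 * (q / Real.sqrt m) ^ 2 = a * q ^ 2 := by
    rw [div_pow, Real.sq_sqrt (by positivity)]
    ring
  have he : -(2 * (m : ℝ) / ρ) - 1 = -(1 + a) / a := by
    simp only [a]
    field_simp
    ring
  have hpos : 0 < 1 + a * q ^ 2 := Real.one_add_mul_pos_of_abs_mul_lt_one (by positivity) haq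
  rw [Real.inv_two_mul_integral_eq hρ hM (hx ▸ hpos), hx, he]
  exact abs_div_one_sub_rpow_div_sub_one_le hM ha (by nlinarith) haq haq4
end
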